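/- arXiv:2106.03190 — 3 statements merged into one kernel-verified Lean document; each statement's English description precedes it below -/
import Mathlib

section
/- For the complete bipartite graph K_{n₁,n₂} with n₁, n₂ ≥ 1, the first Banhatti-Sombor index satisfies BSO(K_{n₁,n₂}) = √(n₁² + n₂²). -/
open Finset

/-- The first Banhatti-Sombor index of a finite simple graph:
`BSO(G) = Σ_{uv ∈ E(G)} √(1/k_u² + 1/k_v²)`, where `k_u` is the degree of `u`. -/
noncomputable def banhattiSomborIndex {V : Type*} [Fintype V] (G : SimpleGraph V)
    [DecidableRel G.Adj] : ℝ :=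
  ∑ e ∈ G.edgeFinset,
    Sym2.lift ⟨fun u v => Real.sqrt (1 / (G.degree u : ℝ) ^ 2 + 1 / (G.degree v : ℝ) ^ 2),
      fun u v => by dsimp only; rw [add_comm]⟩ e

instance {V W : Type*} [DecidableEq V] [DecidableEq W] :
    DecidableRel (completeBipartiteGraph V W).Adj :=
  fun a b => by unfold completeBipartiteGraph; dsimp; infer_instance

/-!
Every edge of `K_{V,W}` joins a vertex of degree `|W|` to one of degree `|V|`, so each of the
`|V| |W|` edges contributes `√(1/|W|² + 1/|V|²)`, and `|V| |W| √(1/|W|² + 1/|V|²) = √(|V|² + |W|²)`.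
-/

namespace SimpleGraph

variable {V W : Type*} [Fintype V] [Fintype W] [DecidableEq V] [DecidableEq W]

theorem completeBipartiteGraph_degree_inl (a : V) :
    (completeBipartiteGraph V W).degree (.inl a) = Fintype.card W := by
  have hnbrs : (completeBipartiteGraph V W).neighborFinset (.inl a) = univ.map .inr := by
    ext (b | b) <;> simp
  rw [← card_neighborFinset_eq_degree, hnbrs, card_map, card_univ]

theorem completeBipartiteGraph_degree_inr (b : W) :
    (completeBipartiteGraph V W).degree (.inr b) = Fintype.card V := by
  have hnbrs : (completeBipartiteGraph V W).neighborFinset (.inr b) = univ.map .inl := by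
    ext (a | a) <;> simp
  rw [← card_neighborFinset_eq_degree, hnbrs, card_map, card_univ]

theorem sum_edgeFinset_completeBipartiteGraph {M : Type*} [AddCommMonoid M]
    (f : Sym2 (V ⊕ W) → M) :
    ∑ e ∈ (completeBipartiteGraph V W).edgeFinset, f e = ∑ x : V × W, f s(.inl x.1, .inr x.2) := by
  have hedges : (completeBipartiteGraph V W).edgeFinset =
      univ.image fun x : V × W => s(.inl x.1, .inr x.2) := by
    ext e
    simp [edgeFinset, edgeSet_completeBipartiteGraph]
  rw [hedges, sum_image fun x _ y _ h => by simpa [Prod.ext_iff] using h]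

end SimpleGraph

theorem mul_mul_sqrt_inv_sq_add_inv_sq {x y : ℝ} (hx : 0 < x) (hy : 0 < y) :
    x * y * √(1 / y ^ 2 + 1 / x ^ 2) = √(x ^ 2 + y ^ 2) := by
  rw [← Real.sqrt_sq (by positivity : 0 ≤ x * y), ← Real.sqrt_mul (by positivity)]
  congr 1
  field_simp

open SimpleGraph in
theorem banhattiSomborIndex_completeBipartiteGraph {V W : Type*} [Fintype V] [Fintype W]
    [DecidableEq V] [DecidableEq W] [Nonempty V] [Nonempty W] :
    banhattiSomborIndex (completeBipartiteGraph V W) =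
      √((Fintype.card V : ℝ) ^ 2 + (Fintype.card W : ℝ) ^ 2) := by
  rw [banhattiSomborIndex, sum_edgeFinset_completeBipartiteGraph]
  simp only [Sym2.lift_mk, completeBipartiteGraph_degree_inl, completeBipartiteGraph_degree_inr,
    Finset.sum_const, Finset.card_univ, Fintype.card_prod, nsmul_eq_mul, Nat.cast_mul]
  exact mul_mul_sqrt_inv_sq_add_inv_sq (by positivity) (by positivity)

/-- For the complete bipartite graph `K_{n₁,n₂}` with `n₁, n₂ ≥ 1`,
`BSO(K_{n₁,n₂}) = √(n₁² + n₂²)`. -/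
theorem banhattiSomborIndex_completeBipartite (n₁ n₂ : ℕ) (h₁ : 1 ≤ n₁) (h₂ : 1 ≤ n₂) :
    banhattiSomborIndex (completeBipartiteGraph (Fin n₁) (Fin n₂)) =
      Real.sqrt ((n₁ : ℝ) ^ 2 + (n₂ : ℝ) ^ 2) := by
  have : NeZero n₁ := ⟨by omega⟩
  have : NeZero n₂ := ⟨by omega⟩
  simpa using banhattiSomborIndex_completeBipartiteGraph (V := Fin n₁) (W := Fin n₂)
end

section
/- For every real r with 0 ≤ r ≤ 1, the 4-dimensional Lebesgue measure of the set {(x, y) ∈ [0,1]² × [0,1]² : dist(x, y) ≤ r} equals r²(π − (8/3)r + (1/2)r²), i.e. π r² − (8/3) r³ + (1/2) r⁴; equivalently, if X and Y are independent points uniformly distributed on the unit square [0,1]², then P(dist(X,Y) ≤ r) = π r² − (8/3) r³ + (1/2) r⁴. -/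
/-!
Substituting `v = x - y`, the measure becomes the integral over the disc `‖v‖ ≤ r` of the area
of the overlap of the unit square with its translate by `v`, which is `(1 - |v₀|) (1 - |v₁|)`
since `r ≤ 1`. Integrating first along the chords `{b | a² + b² ≤ r²}` and then over
`a ∈ [-r, r]` leaves one-variable integrals of `√(r² - x²)`, `x √(r² - x²)` and polynomials.
-/

open MeasureTheory Set Metric Real
open scoped ENNReal

theorem prod_setOf_mem_mem_sub_mem {G : Type*} [MeasurableSpace G] [AddGroup G]
    [MeasurableAdd₂ G] [MeasurableNeg G] (μ : Measure G) [SFinite μ] [μ.IsAddRightInvariant]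
    {A D : Set G} (hA : MeasurableSet A) (hD : MeasurableSet D) :
    μ.prod μ {p | p.1 ∈ A ∧ p.2 ∈ A ∧ p.1 - p.2 ∈ D} =
      ∫⁻ v in D, μ ((v + ·) ⁻¹' A ∩ A) ∂μ := by
  set T := {q : G × G | q.1 + q.2 ∈ A ∧ q.2 ∈ A ∧ q.1 ∈ D}
  have hT : MeasurableSet T :=
    (hA.preimage (measurable_fst.add measurable_snd)).inter
      ((hA.preimage measurable_snd).inter (hD.preimage measurable_fst))
  have hpre : {p : G × G | p.1 ∈ A ∧ p.2 ∈ A ∧ p.1 - p.2 ∈ D} =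
      (fun p => (p.1 - p.2, p.2)) ⁻¹' T := by
    ext p; simp [T, and_left_comm]
  rw [hpre, (measurePreserving_sub_prod μ μ).measure_preimage hT.nullMeasurableSet,
    Measure.prod_apply hT, ← lintegral_indicator hD]
  refine lintegral_congr fun v => ?_
  by_cases hv : v ∈ D
  · rw [indicator_of_mem hv]
    congr 1 with x
    simp [T, hv]
  · simp [T, hv]

def unitCube (ι : Type*) : Set (EuclideanSpace ℝ ι) := {x | ∀ i, x i ∈ Icc 0 1}

theorem measurableSet_unitCube (ι : Type*) [Fintype ι] : MeasurableSet (unitCube ι) := by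
  simp only [unitCube, ofPred_forall]
  exact MeasurableSet.iInter fun i => measurableSet_Icc.preimage (by fun_prop)

theorem volume_preimage_const_add_Icc_inter (v : ℝ) :
    volume ((v + ·) ⁻¹' Icc 0 1 ∩ Icc 0 1) = ENNReal.ofReal (1 - |v|) := by
  rw [preimage_const_add_Icc, Icc_inter_Icc, Real.volume_Icc]
  congr 1
  rcases le_total 0 v with hv | hv
  · simp [abs_of_nonneg hv, hv]
  · simp [abs_of_nonpos hv, hv]

theorem volume_preimage_const_add_unitCube_inter {ι : Type*} [Fintype ι]
    (v : EuclideanSpace ℝ ι) :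
    volume ((v + ·) ⁻¹' unitCube ι ∩ unitCube ι) = ∏ i, ENNReal.ofReal (1 - |v i|) := by
  have hbox : MeasurableSet (univ.pi fun i => (v i + ·) ⁻¹' Icc (0 : ℝ) 1 ∩ Icc 0 1) :=
    .univ_pi fun _ => (measurableSet_Icc.preimage (measurable_const_add _)).inter measurableSet_Icc
  have h : (v + ·) ⁻¹' unitCube ι ∩ unitCube ι =
      WithLp.ofLp ⁻¹' univ.pi fun i => (v i + ·) ⁻¹' Icc 0 1 ∩ Icc 0 1 := by
    ext x
    simp only [unitCube, mem_preimage, mem_inter_iff, mem_ofPred_eq, mem_univ_pi,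
      PiLp.add_apply, forall_and]
  rw [h, (PiLp.volume_preserving_ofLp ι).measure_preimage hbox.nullMeasurableSet, volume_pi_pi]
  simp_rw [volume_preimage_const_add_Icc_inter]

theorem intervalIntegral.integral_comp_abs {f : ℝ → ℝ} (hf : Continuous f) {r : ℝ}
    (hr : 0 ≤ r) : ∫ x in -r..r, f |x| = 2 * ∫ x in 0..r, f x := by
  have hi : ∀ a b, IntervalIntegrable (fun x => f |x|) volume a b :=
    fun a b => (hf.comp continuous_abs).intervalIntegrable a b
  have hpos : ∫ x in 0..r, f |x| = ∫ x in 0..r, f x :=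
    integral_congr fun x hx => by
      rw [uIcc_of_le hr] at hx
      simp only [abs_of_nonneg hx.1]
  have hneg : ∫ x in -r..0, f |x| = ∫ x in 0..r, f |x| := by
    simpa using (integral_comp_neg (a := 0) (b := r) fun x => f |x|).symm
  rw [← integral_add_adjacent_intervals (hi _ 0) (hi 0 _), hneg, hpos, two_mul]

theorem integral_sqrt_sq_sub_sq {r : ℝ} (hr : 0 ≤ r) :
    ∫ x in 0..r, √(r ^ 2 - x ^ 2) = π * r ^ 2 / 4 := by
  have hscale : ∫ x in -r..r, √(r ^ 2 - x ^ 2) = π * r ^ 2 / 2 := by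
    have h := intervalIntegral.mul_integral_comp_mul_left (a := -1) (b := 1)
      (f := fun x => √(r ^ 2 - x ^ 2)) r
    have hsq : ∀ x, √(r ^ 2 - (r * x) ^ 2) = r * √(1 - x ^ 2) := fun x => by
      rw [show r ^ 2 - (r * x) ^ 2 = r ^ 2 * (1 - x ^ 2) by ring, sqrt_mul (sq_nonneg r),
        sqrt_sq hr]
    simp only [hsq, intervalIntegral.integral_const_mul, integral_sqrt_one_sub_sq, mul_neg,
      mul_one] at h
    rw [← h]; ring
  have h := intervalIntegral.integral_comp_abs (f := fun x => √(r ^ 2 - x ^ 2)) (by fun_prop) hr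
  simp only [sq_abs] at h
  linarith

theorem integral_mul_sqrt_sq_sub_sq {r : ℝ} (hr : 0 ≤ r) :
    ∫ x in 0..r, x * √(r ^ 2 - x ^ 2) = r ^ 3 / 3 := by
  have hderiv : ∀ x ∈ Ioo 0 r,
      HasDerivAt (fun x => -√(r ^ 2 - x ^ 2) ^ 3 / 3) (x * √(r ^ 2 - x ^ 2)) x := by
    rintro x ⟨hx0, hxr⟩
    have hpos : 0 < r ^ 2 - x ^ 2 := by nlinarith
    have h :=
      ((((hasDerivAt_pow 2 x).const_sub (r ^ 2)).sqrt hpos.ne').fun_pow 3).fun_neg.div_const 3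
    refine h.congr_deriv ?_
    field_simp
    rw [sq_sqrt hpos.le]
    ring
  rw [intervalIntegral.integral_eq_sub_of_hasDerivAt_of_le hr (by fun_prop) hderiv
    ((by fun_prop : Continuous fun x => x * √(r ^ 2 - x ^ 2)).intervalIntegrable _ _)]
  simp [sqrt_sq hr, neg_div]

theorem integral_one_sub_mul_sq_sub_sq (r : ℝ) :
    ∫ x in 0..r, (1 - x) * (r ^ 2 - x ^ 2) = 2 / 3 * r ^ 3 - r ^ 4 / 4 := by
  have hderiv : ∀ x ∈ uIcc 0 r,
      HasDerivAt (fun x => r ^ 2 * x - x ^ 3 / 3 - r ^ 2 * x ^ 2 / 2 + x ^ 4 / 4)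
        ((1 - x) * (r ^ 2 - x ^ 2)) x := by
    intro x _
    have h := ((((hasDerivAt_id' x).const_mul (r ^ 2)).sub ((hasDerivAt_pow 3 x).div_const 3)).sub
      (((hasDerivAt_pow 2 x).const_mul (r ^ 2)).div_const 2)).add ((hasDerivAt_pow 4 x).div_const 4)
    refine h.congr_deriv ?_
    simp only [Nat.cast_ofNat, Nat.add_one_sub_one, pow_one]
    ring
  rw [intervalIntegral.integral_eq_sub_of_hasDerivAt hderiv
    ((by fun_prop : Continuous fun x : ℝ => (1 - x) * (r ^ 2 - x ^ 2)).intervalIntegrable _ _)]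
  ring

theorem setLIntegral_Icc_ofReal_one_sub_abs {t : ℝ} (ht0 : 0 ≤ t) (ht1 : t ≤ 1) :
    ∫⁻ x in Icc (-t) t, ENNReal.ofReal (1 - |x|) = ENNReal.ofReal (2 * t - t ^ 2) := by
  have hnonneg : 0 ≤ᵐ[volume.restrict (Icc (-t) t)] fun x => 1 - |x| :=
    (ae_restrict_iff' measurableSet_Icc).2 <| .of_forall fun x hx => by
      simp only [Pi.zero_apply, sub_nonneg]; linarith [abs_le.2 hx]
  have hint : ∫ x in -t..t, 1 - |x| = 2 * t - t ^ 2 := by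
    rw [intervalIntegral.integral_comp_abs (f := fun x => 1 - x) (by fun_prop) ht0,
      intervalIntegral.integral_sub intervalIntegrable_const
        intervalIntegral.intervalIntegrable_id]
    simp only [intervalIntegral.integral_const, integral_id, smul_eq_mul]
    ring
  rw [← ofReal_integral_eq_lintegral_ofReal
    ((by fun_prop : Continuous fun x : ℝ => 1 - |x|).integrableOn_Icc) hnonneg,
    integral_Icc_eq_integral_Ioc, ← intervalIntegral.integral_of_le (by linarith), hint]

-- Writing `√(r² - a²) ^ 2` rather than `r² - a²` keeps the formula valid for `|a| > r`.
theorem setLIntegral_chord_ofReal_one_sub_abs {r : ℝ} (hr : r ^ 2 ≤ 1) (a : ℝ) :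
    ∫⁻ b in {b | a ^ 2 + b ^ 2 ≤ r ^ 2}, ENNReal.ofReal (1 - |b|) =
      ENNReal.ofReal (2 * √(r ^ 2 - a ^ 2) - √(r ^ 2 - a ^ 2) ^ 2) := by
  by_cases ha : a ^ 2 ≤ r ^ 2
  · have hchord :
        {b | a ^ 2 + b ^ 2 ≤ r ^ 2} = Icc (-√(r ^ 2 - a ^ 2)) √(r ^ 2 - a ^ 2) := by
      ext b
      rw [mem_Icc, ← Real.sq_le (by linarith), mem_ofPred_eq]
      constructor <;> intro <;> linarith
    rw [hchord,
      setLIntegral_Icc_ofReal_one_sub_abs (sqrt_nonneg _) (sqrt_le_one.2 (by nlinarith))]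
  · have hempty : {b | a ^ 2 + b ^ 2 ≤ r ^ 2} = ∅ :=
      eq_empty_of_forall_notMem fun b hb => ha (by nlinarith [sq_nonneg b, hb.out])
    simp [hempty, sqrt_eq_zero'.2 (by linarith : r ^ 2 - a ^ 2 ≤ 0)]

theorem integral_one_sub_abs_mul_chord {r : ℝ} (hr : 0 ≤ r) :
    ∫ a in -r..r, (1 - |a|) * (2 * √(r ^ 2 - a ^ 2) - √(r ^ 2 - a ^ 2) ^ 2) =
      π * r ^ 2 - 8 / 3 * r ^ 3 + 1 / 2 * r ^ 4 := by
  have h := intervalIntegral.integral_comp_abs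
    (f := fun x => (1 - x) * (2 * √(r ^ 2 - x ^ 2) - √(r ^ 2 - x ^ 2) ^ 2)) (by fun_prop) hr
  simp only [sq_abs] at h
  have hexpand : ∫ x in 0..r, (1 - x) * (2 * √(r ^ 2 - x ^ 2) - √(r ^ 2 - x ^ 2) ^ 2) =
      ∫ x in 0..r, (2 * √(r ^ 2 - x ^ 2) - 2 * (x * √(r ^ 2 - x ^ 2)) -
        (1 - x) * (r ^ 2 - x ^ 2)) := by
    refine intervalIntegral.integral_congr fun x hx => ?_
    rw [uIcc_of_le hr] at hx
    simp only [sq_sqrt (by nlinarith [hx.1, hx.2] : 0 ≤ r ^ 2 - x ^ 2)]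
    ring
  have hi : ∀ f : ℝ → ℝ, Continuous f → IntervalIntegrable f volume 0 r :=
    fun f hf => hf.intervalIntegrable _ _
  rw [h, hexpand, intervalIntegral.integral_sub (hi _ (by fun_prop)) (hi _ (by fun_prop)),
    intervalIntegral.integral_sub (hi _ (by fun_prop)) (hi _ (by fun_prop)),
    intervalIntegral.integral_const_mul, intervalIntegral.integral_const_mul,
    integral_sqrt_sq_sub_sq hr, integral_mul_sqrt_sq_sub_sq hr, integral_one_sub_mul_sq_sub_sq]
  ring

theorem lintegral_ofReal_one_sub_abs_mul_chord {r : ℝ} (h0 : 0 ≤ r) (h1 : r ≤ 1) :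
    ∫⁻ a, ENNReal.ofReal (1 - |a|) *
        ENNReal.ofReal (2 * √(r ^ 2 - a ^ 2) - √(r ^ 2 - a ^ 2) ^ 2) =
      ENNReal.ofReal (π * r ^ 2 - 8 / 3 * r ^ 3 + 1 / 2 * r ^ 4) := by
  have hchord : ∀ a, 0 ≤ 2 * √(r ^ 2 - a ^ 2) - √(r ^ 2 - a ^ 2) ^ 2 := fun a => by
    have : √(r ^ 2 - a ^ 2) ≤ r := (sqrt_le_left h0).2 (by nlinarith)
    nlinarith [sqrt_nonneg (r ^ 2 - a ^ 2)]
  have hsupp : ∀ a ∉ Icc (-r) r, √(r ^ 2 - a ^ 2) = 0 := fun a ha => by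
    rw [mem_Icc, ← abs_le, not_le] at ha
    exact sqrt_eq_zero'.2 (by nlinarith [abs_nonneg a, sq_abs a])
  simp_rw [← ENNReal.ofReal_mul' (hchord _)]
  rw [← setLIntegral_eq_of_support_subset (s := Icc (-r) r) fun a ha => by_contra fun h' =>
      ha (by simp [hsupp a h']),
    ← ofReal_integral_eq_lintegral_ofReal (by fun_prop : Continuous _).integrableOn_Icc
      ((ae_restrict_iff' measurableSet_Icc).2 <| .of_forall fun a ha =>
        mul_nonneg (by linarith [abs_le.2 ha]) (hchord a)),
    integral_Icc_eq_integral_Ioc, ← intervalIntegral.integral_of_le (by linarith),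
    integral_one_sub_abs_mul_chord h0]

theorem setLIntegral_closedBall_fin_two {r : ℝ} (hr : 0 ≤ r) {f : ℝ × ℝ → ℝ≥0∞}
    (hf : Measurable f) :
    ∫⁻ u in closedBall (0 : EuclideanSpace ℝ (Fin 2)) r, f (u 0, u 1) =
      ∫⁻ a, ∫⁻ b in {b | a ^ 2 + b ^ 2 ≤ r ^ 2}, f (a, b) := by
  let e := (MeasurableEquiv.toLp 2 (Fin 2 → ℝ)).symm.trans MeasurableEquiv.finTwoArrow
  have he : MeasurePreserving e :=
    (volume_preserving_finTwoArrow ℝ).comp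
      (EuclideanSpace.volume_preserving_symm_measurableEquiv_toLp _)
  let D := {p : ℝ × ℝ | p.1 ^ 2 + p.2 ^ 2 ≤ r ^ 2}
  have hD : MeasurableSet D := measurableSet_le (by fun_prop) (by fun_prop)
  have hball : closedBall 0 r = e ⁻¹' D := by
    ext u
    simp [e, D, EuclideanSpace.norm_eq, sqrt_le_left hr, Fin.sum_univ_two]
  rw [hball]
  refine (he.setLIntegral_comp_preimage_emb e.measurableEmbedding f D).trans ?_
  rw [Measure.volume_eq_prod, ← lintegral_indicator hD,
    lintegral_prod _ (hf.indicator hD).aemeasurable]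
  refine lintegral_congr fun a => ?_
  rw [← lintegral_indicator (measurableSet_le (by fun_prop) (by fun_prop))]
  rfl

theorem setLIntegral_closedBall_prod_ofReal_one_sub_abs {r : ℝ} (h0 : 0 ≤ r) (h1 : r ≤ 1) :
    ∫⁻ u in closedBall (0 : EuclideanSpace ℝ (Fin 2)) r, ∏ i, ENNReal.ofReal (1 - |u i|) =
      ENNReal.ofReal (π * r ^ 2 - 8 / 3 * r ^ 3 + 1 / 2 * r ^ 4) := by
  simp_rw [Fin.prod_univ_two]
  rw [setLIntegral_closedBall_fin_two h0
    (f := fun p => ENNReal.ofReal (1 - |p.1|) * ENNReal.ofReal (1 - |p.2|)) (by fun_prop)]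
  simp_rw [lintegral_const_mul' _ _ ENNReal.ofReal_ne_top,
    setLIntegral_chord_ofReal_one_sub_abs (by nlinarith : r ^ 2 ≤ 1)]
  exact lintegral_ofReal_one_sub_abs_mul_chord h0 h1

/-- For `0 ≤ r ≤ 1`, the 4-dimensional Lebesgue measure of the set of pairs of points of
the unit square `[0,1]² ⊂ ℝ²` lying within Euclidean distance `r` of each other equals
`π r² − (8/3) r³ + (1/2) r⁴`.  Equivalently, this is the probability that two independent
uniform points of the unit square are at distance at most `r`. -/
theorem volume_pairs_unitSquare_dist_le (r : ℝ) (h0 : 0 ≤ r) (h1 : r ≤ 1) :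
    volume {p : EuclideanSpace ℝ (Fin 2) × EuclideanSpace ℝ (Fin 2) |
        (∀ i, p.1 i ∈ Set.Icc (0 : ℝ) 1) ∧ (∀ i, p.2 i ∈ Set.Icc (0 : ℝ) 1) ∧
          dist p.1 p.2 ≤ r} =
      ENNReal.ofReal (π * r ^ 2 - 8 / 3 * r ^ 3 + 1 / 2 * r ^ 4) := by
  calc _ = volume.prod volume {p : EuclideanSpace ℝ (Fin 2) × EuclideanSpace ℝ (Fin 2) |
          p.1 ∈ unitCube (Fin 2) ∧ p.2 ∈ unitCube (Fin 2) ∧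
            p.1 - p.2 ∈ closedBall 0 r} := by
        rw [Measure.volume_eq_prod]
        congr 1 with p
        simp [unitCube, dist_eq_norm]
    _ = ∫⁻ v in closedBall 0 r, volume ((v + ·) ⁻¹' unitCube (Fin 2) ∩ unitCube (Fin 2)) :=
        prod_setOf_mem_mem_sub_mem volume (measurableSet_unitCube _) measurableSet_closedBall
    _ = ∫⁻ v in closedBall (0 : EuclideanSpace ℝ (Fin 2)) r,
          ∏ i, ENNReal.ofReal (1 - |v i|) := by
        simp_rw [volume_preimage_const_add_unitCube_inter]
    _ = _ := setLIntegral_closedBall_prod_ofReal_one_sub_abs h0 h1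
end

section
/- For every real r with 1 ≤ r ≤ √2, the 4-dimensional Lebesgue measure of the set {(x, y) ∈ [0,1]² × [0,1]² : dist(x, y) ≤ r} equals 1/3 − 2r²(1 − arcsin(1/r) + arccos(1/r)) + (4/3)(2r² + 1)√(r² − 1) − (1/2) r⁴; equivalently, this is the probability that two independent uniform points of the unit square lie within Euclidean distance r of each other. -/
/-!
Write a pair of points `x, y` of the unit square as `((x₁, y₁), (x₂, y₂))`. For fixed first
coordinates with `|x₁ - y₁| = v`, the admissible second coordinates form the strip
`|x₂ - y₂| ≤ √(r² - v²)` of the unit square, and a strip of width `t` has area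
`1 - max (1 - t) 0 ^ 2`. Integrating a function of `x₁ - y₁` over the unit square weighs it by the
density `2 (1 - u)` of `u = |x₁ - y₁|`, so the measure is `2 ∫₀¹ (1 - u) A(√(r² - u²)) du` with `A`
the strip area. For `1 ≤ r ≤ √2` the strip is the whole square exactly while
`u ≤ √(r² - 1) ≤ 1`, and beyond that point the integrand has an elementary antiderivative built
from `x √(r² - x²) + r² arcsin (x / r)`.
-/

open MeasureTheory Real Set intervalIntegral

theorem MeasureTheory.Measure.prod_setOf_fst_mem_snd_mem {α β : Type*} [MeasurableSpace α]
    [MeasurableSpace β] (μ : Measure α) (ν : Measure β) [SFinite ν] {s : Set α} {t : α → Set β}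
    (hs : MeasurableSet s) (hst : MeasurableSet {p : α × β | p.1 ∈ s ∧ p.2 ∈ t p.1}) :
    μ.prod ν {p : α × β | p.1 ∈ s ∧ p.2 ∈ t p.1} = ∫⁻ a in s, ν (t a) ∂μ := by
  classical
  rw [Measure.prod_apply hst, ← lintegral_indicator hs]
  congr 1 with a
  by_cases ha : a ∈ s <;> simp [ha, preimage]

theorem hasDerivAt_max_sub_zero_sq (c a : ℝ) :
    HasDerivAt (fun x => max (x - c) 0 ^ 2) (2 * max (a - c) 0) a := by
  rcases lt_trichotomy a c with hac | rfl | hac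
  · have hzero : (fun x => max (x - c) 0 ^ 2) =ᶠ[nhds a] fun _ => 0 := by
      filter_upwards [eventually_lt_nhds hac] with x hx
      simp [max_eq_right (by linarith : x - c ≤ 0)]
    rw [max_eq_right (by linarith), mul_zero]
    exact (hasDerivAt_const a 0).congr_of_eventuallyEq hzero
  · have hleft : HasDerivWithinAt (fun x => max (x - a) 0 ^ 2) 0 (Iic a) a :=
      (hasDerivWithinAt_const a _ 0).congr (fun x hx => by simp [show x - a ≤ 0 by simpa using hx])
        (by simp)
    have hright : HasDerivWithinAt (fun x => max (x - a) 0 ^ 2) 0 (Ici a) a := by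
      have h := ((hasDerivAt_id a).sub_const a).pow 2
      simp only [id, sub_self] at h
      exact (h.hasDerivWithinAt.congr (fun x hx => by simp [show 0 ≤ x - a by simpa using hx])
        (by simp)).congr_deriv (by simp)
    simpa [Iic_union_Ici] using hleft.union hright
  · have hpos : (fun x => max (x - c) 0 ^ 2) =ᶠ[nhds a] fun x => (x - c) ^ 2 := by
      filter_upwards [eventually_gt_nhds hac] with x hx
      simp [max_eq_left (by linarith : 0 ≤ x - c)]
    rw [max_eq_left (by linarith)]
    simpa using (((hasDerivAt_id a).sub_const c).pow 2).congr_of_eventuallyEq hpos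

theorem integral_max_sub_zero (a b c : ℝ) :
    ∫ x in a..b, max (x - c) 0 = (max (b - c) 0 ^ 2 - max (a - c) 0 ^ 2) / 2 := by
  have hcont : Continuous fun x : ℝ => max (x - c) 0 := by fun_prop
  have h := integral_eq_sub_of_hasDerivAt (fun x _ => hasDerivAt_max_sub_zero_sq c x)
    ((continuous_const.mul hcont).intervalIntegrable a b)
  rw [intervalIntegral.integral_const_mul] at h
  linarith

def unitSquareStrip (t : ℝ) : Set (ℝ × ℝ) :=
  {q | q.1 ∈ Icc 0 1 ∧ q.2 ∈ Icc 0 1 ∧ |q.1 - q.2| ≤ t}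

noncomputable def stripArea (t : ℝ) : ℝ := 1 - max (1 - t) 0 ^ 2

theorem stripArea_nonneg {t : ℝ} (ht : 0 ≤ t) : 0 ≤ stripArea t := by
  unfold stripArea
  have : max (1 - t) 0 ≤ 1 := max_le (by linarith) zero_le_one
  nlinarith [le_max_right (1 - t) 0]

theorem continuous_stripArea : Continuous stripArea := by
  unfold stripArea; fun_prop

theorem stripArea_of_one_le {t : ℝ} (ht : 1 ≤ t) : stripArea t = 1 := by
  simp [stripArea, max_eq_right (by linarith : 1 - t ≤ 0)]

theorem stripArea_of_le_one {t : ℝ} (ht : t ≤ 1) : stripArea t = 2 * t - t ^ 2 := by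
  rw [stripArea, max_eq_left (by linarith : 0 ≤ 1 - t)]
  ring

theorem volume_setOf_mem_Icc_abs_sub_le (t a : ℝ) :
    volume {b : ℝ | b ∈ Icc (0 : ℝ) 1 ∧ |a - b| ≤ t}
      = ENNReal.ofReal (min 1 (a + t) - max 0 (a - t)) := by
  rw [← Real.volume_Icc]
  congr 1 with b
  simp only [mem_ofPred_eq, mem_Icc, abs_sub_le_iff, max_le_iff, le_min_iff]
  constructor <;> intro h <;> refine ⟨⟨?_, ?_⟩, ?_, ?_⟩ <;> linarith

theorem integral_min_sub_max_eq_stripArea {t : ℝ} (ht : 0 ≤ t) :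
    ∫ a in (0 : ℝ)..1, (min 1 (a + t) - max 0 (a - t)) = stripArea t := by
  have hsplit (a : ℝ) :
      min 1 (a + t) - max 0 (a - t) = a + t - max (a - (1 - t)) 0 - max (a - t) 0 := by
    simp only [min_def, max_def]
    split_ifs <;> linarith
  have hmax (c : ℝ) : IntervalIntegrable (fun a : ℝ => max (a - c) 0) volume 0 1 :=
    (by fun_prop : Continuous fun a : ℝ => max (a - c) 0).intervalIntegrable 0 1
  have hlin : IntervalIntegrable (fun a : ℝ => a + t) volume 0 1 :=
    (by fun_prop : Continuous fun a : ℝ => a + t).intervalIntegrable 0 1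
  simp only [hsplit]
  rw [intervalIntegral.integral_sub (hlin.sub (hmax _)) (hmax _),
    intervalIntegral.integral_sub hlin (hmax _), integral_max_sub_zero, integral_max_sub_zero,
    intervalIntegral.integral_add intervalIntegral.intervalIntegrable_id intervalIntegrable_const]
  have h0 : max (0 - t) 0 = 0 := max_eq_right (by linarith)
  have h1 : max (1 - (1 - t)) 0 = t := by rw [sub_sub_cancel, max_eq_left ht]
  simp only [integral_id, intervalIntegral.integral_const, smul_eq_mul, stripArea, h0, h1]
  rcases le_total t 1 with h | h
  · rw [max_eq_right (by linarith : 0 - (1 - t) ≤ 0), max_eq_left (by linarith : 0 ≤ 1 - t)]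
    ring
  · rw [max_eq_left (by linarith : 0 ≤ 0 - (1 - t)), max_eq_right (by linarith : 1 - t ≤ 0)]
    ring

theorem volume_unitSquareStrip {t : ℝ} (ht : 0 ≤ t) :
    volume (unitSquareStrip t) = ENNReal.ofReal (stripArea t) := by
  have hmeas : MeasurableSet (unitSquareStrip t) :=
    (measurable_fst measurableSet_Icc).inter ((measurable_snd measurableSet_Icc).inter
      (measurableSet_le (by fun_prop : Measurable fun q : ℝ × ℝ => |q.1 - q.2|)
        measurable_const))
  have hlen : Continuous fun a : ℝ => min 1 (a + t) - max 0 (a - t) := by fun_prop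
  have hnonneg : ∀ a ∈ Icc (0 : ℝ) 1, 0 ≤ min 1 (a + t) - max 0 (a - t) := by
    rintro a ⟨ha0, ha1⟩
    simp only [sub_nonneg, max_le_iff, le_min_iff]
    refine ⟨⟨?_, ?_⟩, ?_, ?_⟩ <;> linarith
  change volume {q : ℝ × ℝ | q.1 ∈ Icc 0 1 ∧ q.2 ∈ {b | b ∈ Icc 0 1 ∧ |q.1 - b| ≤ t}} = _
  rw [Measure.volume_eq_prod, Measure.prod_setOf_fst_mem_snd_mem _ _
    (t := fun a => {b | b ∈ Icc (0 : ℝ) 1 ∧ |a - b| ≤ t}) measurableSet_Icc hmeas]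
  simp only [volume_setOf_mem_Icc_abs_sub_le]
  rw [← ofReal_integral_eq_lintegral_ofReal hlen.integrableOn_Icc
      ((ae_restrict_iff' measurableSet_Icc).2 (Filter.Eventually.of_forall hnonneg)),
    integral_Icc_eq_integral_Ioc, ← integral_of_le zero_le_one,
    integral_min_sub_max_eq_stripArea ht]

theorem integral_integral_eq_integral_sub_mul {g : ℝ → ℝ} (hg : Continuous g) (a b : ℝ) :
    ∫ x in a..b, (∫ u in a..x, g u) = ∫ u in a..b, (b - u) * g u := by
  have hG (x : ℝ) : HasDerivAt (fun x => ∫ u in a..x, g u) (g x) x :=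
    (hg.integral_hasStrictDerivAt a x).hasDerivAt
  have hparts := integral_mul_deriv_eq_deriv_mul (fun x _ => hG x)
    (fun x _ => (hasDerivAt_id x).sub_const b) (hg.intervalIntegrable a b)
    (intervalIntegrable_const (c := (1 : ℝ)))
  simp only [mul_one, id, sub_self, mul_zero, integral_same, zero_mul] at hparts
  rw [hparts, zero_sub, ← intervalIntegral.integral_neg]
  congr 1 with u
  ring

theorem integral_integral_comp_sub_of_even {g : ℝ → ℝ} (hg : Continuous g)
    (heven : ∀ v, g (-v) = g v) :
    ∫ x in (0 : ℝ)..1, ∫ y in (0 : ℝ)..1, g (x - y) = 2 * ∫ u in (0 : ℝ)..1, (1 - u) * g u := by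
  set G : ℝ → ℝ := fun x => ∫ u in (0 : ℝ)..x, g u with hG
  have hGodd (z : ℝ) : G (-z) = -G z := by
    have h := intervalIntegral.integral_comp_neg (a := 0) (b := z) g
    simp only [heven, neg_zero] at h
    simp only [hG]
    rw [integral_symm, h]
  have hinner (x : ℝ) : ∫ y in (0 : ℝ)..1, g (x - y) = G x + G (1 - x) := by
    rw [intervalIntegral.integral_comp_sub_left g x, sub_zero,
      ← integral_interval_sub_left (hg.intervalIntegrable 0 x) (hg.intervalIntegrable 0 (x - 1)),
      ← neg_sub x 1, hGodd]
    ring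
  have hGcont : Continuous G := continuous_primitive (fun _ _ => hg.intervalIntegrable _ _) 0
  have hreflect : ∫ x in (0 : ℝ)..1, G (1 - x) = ∫ x in (0 : ℝ)..1, G x := by
    simp [intervalIntegral.integral_comp_sub_left G 1]
  have hGrefl : Continuous fun x => G (1 - x) := hGcont.comp (by fun_prop)
  simp only [hinner]
  rw [intervalIntegral.integral_add (hGcont.intervalIntegrable 0 1)
      (hGrefl.intervalIntegrable 0 1),
    hreflect, integral_integral_eq_integral_sub_mul hg]
  ring

theorem measurableSet_setOf_mem_unitSquareStrip_comp_sub {h : ℝ → ℝ} (hh : Measurable h) :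
    MeasurableSet {w : (ℝ × ℝ) × (ℝ × ℝ) |
      w.1 ∈ Icc (0 : ℝ) 1 ×ˢ Icc (0 : ℝ) 1 ∧ w.2 ∈ unitSquareStrip (h (w.1.1 - w.1.2))} :=
  (measurable_fst (measurableSet_Icc.prod measurableSet_Icc)).inter
    ((measurable_snd.fst measurableSet_Icc).inter ((measurable_snd.snd measurableSet_Icc).inter
      (measurableSet_le (by fun_prop : Measurable fun w : (ℝ × ℝ) × (ℝ × ℝ) => |w.2.1 - w.2.2|)
        (hh.comp (by fun_prop)))))

theorem volume_setOf_mem_unitSquareStrip_comp_sub {h : ℝ → ℝ} (hh : Continuous h)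
    (h0 : ∀ v, 0 ≤ h v) :
    volume {w : (ℝ × ℝ) × (ℝ × ℝ) |
        w.1 ∈ Icc (0 : ℝ) 1 ×ˢ Icc (0 : ℝ) 1 ∧ w.2 ∈ unitSquareStrip (h (w.1.1 - w.1.2))}
      = ENNReal.ofReal (∫ x in (0 : ℝ)..1, ∫ y in (0 : ℝ)..1, stripArea (h (x - y))) := by
  have hsq : MeasurableSet (Icc (0 : ℝ) 1 ×ˢ Icc (0 : ℝ) 1) :=
    measurableSet_Icc.prod measurableSet_Icc
  have hf : Continuous fun p : ℝ × ℝ => stripArea (h (p.1 - p.2)) :=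
    continuous_stripArea.comp (hh.comp (by fun_prop))
  have hint : IntegrableOn (fun p : ℝ × ℝ => stripArea (h (p.1 - p.2)))
      (Icc (0 : ℝ) 1 ×ˢ Icc (0 : ℝ) 1) :=
    hf.continuousOn.integrableOn_compact (isCompact_Icc.prod isCompact_Icc)
  rw [Measure.volume_eq_prod, Measure.prod_setOf_fst_mem_snd_mem _ _
    (t := fun p => unitSquareStrip (h (p.1 - p.2))) hsq
    (measurableSet_setOf_mem_unitSquareStrip_comp_sub hh.measurable)]
  simp only [volume_unitSquareStrip (h0 _)]
  rw [← ofReal_integral_eq_lintegral_ofReal hint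
      (Filter.Eventually.of_forall fun p => stripArea_nonneg (h0 _)),
    Measure.volume_eq_prod, setIntegral_prod _ hint]
  simp only [integral_Icc_eq_integral_Ioc, ← integral_of_le zero_le_one]

theorem hasDerivAt_sqrt_sq_sub_sq {r u : ℝ} (hu : u ^ 2 < r ^ 2) :
    HasDerivAt (fun x => √(r ^ 2 - x ^ 2)) (-u / √(r ^ 2 - u ^ 2)) u := by
  refine (((hasDerivAt_pow 2 u).const_sub (r ^ 2)).sqrt (sub_pos.2 hu).ne').congr_deriv ?_
  field_simp
  ring

theorem hasDerivAt_mul_sqrt_add_arcsin {r u : ℝ} (hu : |u| < r) :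
    HasDerivAt (fun x => x * √(r ^ 2 - x ^ 2) + r ^ 2 * arcsin (x / r))
      (2 * √(r ^ 2 - u ^ 2)) u := by
  have hr : 0 < r := (abs_nonneg u).trans_lt hu
  have husq : u ^ 2 < r ^ 2 := sq_lt_sq' (abs_lt.1 hu).1 (abs_lt.1 hu).2
  have hpos : 0 < √(r ^ 2 - u ^ 2) := sqrt_pos.2 (sub_pos.2 husq)
  have hdiv : |u / r| < 1 := by rwa [abs_div, abs_of_pos hr, div_lt_one hr]
  have harcsin := (hasDerivAt_arcsin (abs_lt.1 hdiv).1.ne' (abs_lt.1 hdiv).2.ne).comp u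
    ((hasDerivAt_id' u).div_const r)
  have hsqrt : √(1 - (u / r) ^ 2) = √(r ^ 2 - u ^ 2) / r := by
    rw [show 1 - (u / r) ^ 2 = (r ^ 2 - u ^ 2) / r ^ 2 by field_simp, sqrt_div' _ (sq_nonneg r),
      sqrt_sq hr.le]
  rw [hsqrt] at harcsin
  refine (((hasDerivAt_id' u).fun_mul (hasDerivAt_sqrt_sq_sub_sq husq)).fun_add
    (harcsin.const_mul (r ^ 2))).congr_deriv ?_
  field_simp
  rw [sq_sqrt (sub_pos.2 husq).le]
  ring

theorem hasDerivAt_sub_sq_mul_sqrt {r u : ℝ} (hu : u ^ 2 < r ^ 2) :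
    HasDerivAt (fun x => (r ^ 2 - x ^ 2) * √(r ^ 2 - x ^ 2)) (-3 * u * √(r ^ 2 - u ^ 2)) u := by
  have hpos : 0 < √(r ^ 2 - u ^ 2) := sqrt_pos.2 (sub_pos.2 hu)
  refine (((hasDerivAt_pow 2 u).const_sub (r ^ 2)).fun_mul
    (hasDerivAt_sqrt_sq_sub_sq hu)).congr_deriv ?_
  field_simp
  rw [sq_sqrt (sub_pos.2 hu).le]
  ring

noncomputable def stripPrimitive (r x : ℝ) : ℝ :=
  x * √(r ^ 2 - x ^ 2) + r ^ 2 * arcsin (x / r) + 2 / 3 * ((r ^ 2 - x ^ 2) * √(r ^ 2 - x ^ 2))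
    + (x ^ 3 / 3 + r ^ 2 * x ^ 2 / 2 - x ^ 4 / 4 - r ^ 2 * x)

theorem hasDerivAt_stripPrimitive {r u : ℝ} (hu : |u| < r) :
    HasDerivAt (stripPrimitive r) ((1 - u) * (2 * √(r ^ 2 - u ^ 2) - (r ^ 2 - u ^ 2))) u := by
  have husq : u ^ 2 < r ^ 2 := sq_lt_sq' (abs_lt.1 hu).1 (abs_lt.1 hu).2
  have hpoly : HasDerivAt (fun x : ℝ => x ^ 3 / 3 + r ^ 2 * x ^ 2 / 2 - x ^ 4 / 4 - r ^ 2 * x)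
      (u ^ 2 + r ^ 2 * u - u ^ 3 - r ^ 2) u := by
    refine (((((hasDerivAt_pow 3 u).div_const 3).fun_add
      (((hasDerivAt_pow 2 u).const_mul (r ^ 2)).div_const 2)).fun_sub
      ((hasDerivAt_pow 4 u).div_const 4)).fun_sub
      ((hasDerivAt_id' u).const_mul (r ^ 2))).congr_deriv ?_
    push_cast
    ring
  refine (((hasDerivAt_mul_sqrt_add_arcsin hu).fun_add
    ((hasDerivAt_sub_sq_mul_sqrt husq).const_mul (2 / 3))).fun_add hpoly).congr_deriv ?_
  ring

theorem arcsin_sqrt_sq_sub_one_div {r : ℝ} (hr : 1 ≤ r) :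
    arcsin (√(r ^ 2 - 1) / r) = arccos (1 / r) := by
  have hr0 : 0 < r := one_pos.trans_le hr
  rw [arccos_eq_arcsin (by positivity), show 1 - (1 / r) ^ 2 = (r ^ 2 - 1) / r ^ 2 by field_simp,
    sqrt_div' _ (sq_nonneg r), sqrt_sq hr0.le]

theorem two_mul_integral_one_sub_mul_stripArea {r : ℝ} (h1 : 1 ≤ r) (h2 : r ≤ √2) :
    2 * ∫ u in (0 : ℝ)..1, (1 - u) * stripArea √(r ^ 2 - u ^ 2) =
      1 / 3 - 2 * r ^ 2 * (1 - arcsin (1 / r) + arccos (1 / r))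
        + 4 / 3 * (2 * r ^ 2 + 1) * √(r ^ 2 - 1) - 1 / 2 * r ^ 4 := by
  have hr2 : r ^ 2 ≤ 2 := by
    simpa using pow_le_pow_left₀ (by positivity) h2 2
  set s := √(r ^ 2 - 1)
  have hs0 : 0 ≤ s := sqrt_nonneg _
  have hs2 : s ^ 2 = r ^ 2 - 1 := sq_sqrt (by nlinarith)
  have hs1 : s ≤ 1 := sqrt_le_one.2 (by linarith)
  have hcont : Continuous fun u => (1 - u) * stripArea √(r ^ 2 - u ^ 2) :=
    (continuous_const.sub continuous_id).mul (continuous_stripArea.comp (by fun_prop))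
  have hnear : ∫ u in (0 : ℝ)..s, (1 - u) * stripArea √(r ^ 2 - u ^ 2) = s - s ^ 2 / 2 := by
    rw [integral_congr (g := fun u => 1 - u) fun u hu => ?_]
    · rw [intervalIntegral.integral_sub intervalIntegrable_const
        intervalIntegral.intervalIntegrable_id]
      simp
    rw [uIcc_of_le hs0] at hu
    rw [stripArea_of_one_le (one_le_sqrt.2 (by nlinarith [hu.1, hu.2])), mul_one]
  have hfar : ∫ u in s..1, (1 - u) * stripArea √(r ^ 2 - u ^ 2)
      = stripPrimitive r 1 - stripPrimitive r s := by
    rw [integral_congr (g := fun u => (1 - u) * (2 * √(r ^ 2 - u ^ 2) - (r ^ 2 - u ^ 2)))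
      fun u hu => ?_]
    · refine integral_eq_sub_of_hasDeriv_right_of_le hs1
        (by unfold stripPrimitive; fun_prop) (fun x hx =>
        (hasDerivAt_stripPrimitive (abs_lt.2 ⟨?_, ?_⟩)).hasDerivWithinAt)
        ((by fun_prop : Continuous fun u : ℝ =>
          (1 - u) * (2 * √(r ^ 2 - u ^ 2) - (r ^ 2 - u ^ 2))).intervalIntegrable s 1)
      · linarith [hx.1]
      · linarith [hx.2]
    rw [uIcc_of_le hs1] at hu
    have hnn : 0 ≤ r ^ 2 - u ^ 2 := by nlinarith [hu.1, hu.2]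
    rw [stripArea_of_le_one (sqrt_le_one.2 (by nlinarith [hu.1, hu.2])), sq_sqrt hnn]
  rw [← integral_add_adjacent_intervals (hcont.intervalIntegrable 0 s)
    (hcont.intervalIntegrable s 1), hnear, hfar]
  simp only [stripPrimitive]
  rw [show r ^ 2 - s ^ 2 = 1 by linarith, arcsin_sqrt_sq_sub_one_div h1]
  simp only [one_pow, sqrt_one, mul_one, one_mul]
  linear_combination (s ^ 2 / 2 - 2 / 3 * s - 3 / 2 - r ^ 2 / 2) * hs2

theorem measurePreserving_euclideanSpace_fin_two_prod :
    MeasurePreserving (fun p : EuclideanSpace ℝ (Fin 2) × EuclideanSpace ℝ (Fin 2) =>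
      ((p.1 0, p.2 0), (p.1 1, p.2 1))) volume volume :=
  have hE := EuclideanSpace.volume_preserving_symm_measurableEquiv_toLp (Fin 2)
  (volume_preserving_finTwoArrow (ℝ × ℝ)).comp
    ((volume_measurePreserving_arrowProdEquivProdArrow ℝ ℝ (Fin 2)).symm.comp (hE.prod hE))

theorem EuclideanSpace.dist_le_iff_abs_sub_le_sqrt {x y : EuclideanSpace ℝ (Fin 2)} {r : ℝ}
    (h : |x 0 - y 0| ≤ r) :
    dist x y ≤ r ↔ |x 1 - y 1| ≤ √(r ^ 2 - (x 0 - y 0) ^ 2) := by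
  have hr : 0 ≤ r := (abs_nonneg _).trans h
  have hsq : (x 0 - y 0) ^ 2 ≤ r ^ 2 := sq_le_sq' (abs_le.1 h).1 (abs_le.1 h).2
  rw [EuclideanSpace.dist_eq, Fin.sum_univ_two, Real.dist_eq, Real.dist_eq, sq_abs, sq_abs,
    sqrt_le_left hr, le_sqrt (abs_nonneg _) (sub_nonneg.2 hsq), sq_abs]
  constructor <;> intro <;> linarith

theorem setOf_unitSquare_dist_le_eq_preimage {r : ℝ} (hr : 1 ≤ r) :
    {p : EuclideanSpace ℝ (Fin 2) × EuclideanSpace ℝ (Fin 2) |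
        (∀ i, p.1 i ∈ Icc (0 : ℝ) 1) ∧ (∀ i, p.2 i ∈ Icc (0 : ℝ) 1) ∧ dist p.1 p.2 ≤ r} =
      (fun p : EuclideanSpace ℝ (Fin 2) × EuclideanSpace ℝ (Fin 2) =>
        ((p.1 0, p.2 0), (p.1 1, p.2 1))) ⁻¹' {w : (ℝ × ℝ) × (ℝ × ℝ) |
          w.1 ∈ Icc (0 : ℝ) 1 ×ˢ Icc (0 : ℝ) 1 ∧
            w.2 ∈ unitSquareStrip √(r ^ 2 - (w.1.1 - w.1.2) ^ 2)} := by
  have hclose {a b : ℝ} (ha : a ∈ Icc (0 : ℝ) 1) (hb : b ∈ Icc (0 : ℝ) 1) : |a - b| ≤ r :=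
    abs_sub_le_iff.2 ⟨by linarith [ha.2, hb.1], by linarith [ha.1, hb.2]⟩
  ext ⟨x, y⟩
  simp only [mem_ofPred_eq, mem_preimage, mem_prod, unitSquareStrip, Fin.forall_fin_two]
  constructor
  · rintro ⟨⟨hx0, hx1⟩, ⟨hy0, hy1⟩, hdist⟩
    exact ⟨⟨hx0, hy0⟩, hx1, hy1,
      (EuclideanSpace.dist_le_iff_abs_sub_le_sqrt (hclose hx0 hy0)).1 hdist⟩
  · rintro ⟨⟨hx0, hy0⟩, hx1, hy1, hstrip⟩
    exact ⟨⟨hx0, hx1⟩, ⟨hy0, hy1⟩,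
      (EuclideanSpace.dist_le_iff_abs_sub_le_sqrt (hclose hx0 hy0)).2 hstrip⟩

/-- For `1 ≤ r ≤ √2`, the 4-dimensional Lebesgue measure of the set of pairs of points of
the unit square `[0,1]² ⊂ ℝ²` lying within Euclidean distance `r` of each other equals
`1/3 − 2r²(1 − arcsin(1/r) + arccos(1/r)) + (4/3)(2r² + 1)√(r² − 1) − (1/2) r⁴`.
Equivalently, this is the probability that two independent uniform points of the unit
square are at distance at most `r`. -/
theorem volume_pairs_unitSquare_dist_le' (r : ℝ) (h1 : 1 ≤ r) (h2 : r ≤ Real.sqrt 2) :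
    volume {p : EuclideanSpace ℝ (Fin 2) × EuclideanSpace ℝ (Fin 2) |
        (∀ i, p.1 i ∈ Set.Icc (0 : ℝ) 1) ∧ (∀ i, p.2 i ∈ Set.Icc (0 : ℝ) 1) ∧
          dist p.1 p.2 ≤ r} =
      ENNReal.ofReal (1 / 3 - 2 * r ^ 2 * (1 - arcsin (1 / r) + arccos (1 / r))
        + 4 / 3 * (2 * r ^ 2 + 1) * Real.sqrt (r ^ 2 - 1) - 1 / 2 * r ^ 4) := by
  have hsqrt : Continuous fun v : ℝ => √(r ^ 2 - v ^ 2) := by fun_prop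
  rw [setOf_unitSquare_dist_le_eq_preimage h1,
    measurePreserving_euclideanSpace_fin_two_prod.measure_preimage
      (measurableSet_setOf_mem_unitSquareStrip_comp_sub hsqrt.measurable).nullMeasurableSet,
    volume_setOf_mem_unitSquareStrip_comp_sub hsqrt fun _ => sqrt_nonneg _,
    integral_integral_comp_sub_of_even (g := fun v => stripArea √(r ^ 2 - v ^ 2))
      (continuous_stripArea.comp hsqrt) fun v => by simp,
    two_mul_integral_one_sub_mul_stripArea h1 h2]
end
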